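/- arXiv:1512.00380 — 5 statements merged into one kernel-verified Lean document; each statement's English description precedes it below -/
import Mathlib

section
/- For every closed set T ⊆ [0,1] × ℝ there exist a countable set A ⊆ [0,1] and a function f : A → ℝ such that the set of accumulation points (in ℝ²) of the graph {(a, f a) : a ∈ A} is exactly T. -/
open Set Filter Topology Metric

noncomputable section

/-- The graph of `f` restricted to the set `A`, as a subset of `ℝ × ℝ`. -/
def graphOn (A : Set ℝ) (f : ℝ → ℝ) : Set (ℝ × ℝ) :=
  {p : ℝ × ℝ | p.1 ∈ A ∧ p.2 = f p.1}

/-- The set of accumulation points of a set `G ⊆ ℝ × ℝ`. -/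
def accPts (G : Set (ℝ × ℝ)) : Set (ℝ × ℝ) :=
  {p : ℝ × ℝ | AccPt p (𝓟 G)}

/-- Baire class 1 on `[0,1]`: pointwise limit of continuous functions. -/
def Baire1 (f : ℝ → ℝ) : Prop :=
  ∃ g : ℕ → ℝ → ℝ, (∀ n, ContinuousOn (g n) (Icc 0 1)) ∧
    ∀ x ∈ Icc (0:ℝ) 1, Tendsto (fun n => g n x) atTop (𝓝 (f x))

/-- Baire class 2 on `[0,1]`: pointwise limit of Baire class 1 functions. -/
def Baire2 (f : ℝ → ℝ) : Prop :=
  ∃ g : ℕ → ℝ → ℝ, (∀ n, Baire1 (g n)) ∧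
    ∀ x ∈ Icc (0:ℝ) 1, Tendsto (fun n => g n x) atTop (𝓝 (f x))

/-- A set is meager relative to the subspace `[0,1]`. -/
def MeagreIn01 (D : Set ℝ) : Prop :=
  IsMeagre ((↑) ⁻¹' D : Set (Icc (0:ℝ) 1))

/-- Embedding of the plane into `ℝ × ℝ̄` (extended reals in the second coordinate). -/
def embedE (p : ℝ × ℝ) : ℝ × EReal := (p.1, (p.2 : EReal))

/-!
Take a sequence `d` with `closure (range d) = T` and repeat each term infinitely often:
`e m = d m.unpair.1`, whose cluster points form exactly `T`. Move the abscissa of `e m` by less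
than `1 / (m + 1)` inside `[0,1]`, keeping all abscissas distinct (each admissible window is
infinite). The moved points form the graph of a function on a countable set; being pairwise
distinct, their accumulation points are the cluster points of the moved sequence, and those are
the cluster points of `e`, because the displacement tends to `0`.
-/

open Function TopologicalSpace

theorem exists_injective_forall_mem_of_infinite {α : Type*} {s : ℕ → Set α}
    (hs : ∀ n, (s n).Infinite) : ∃ f : ℕ → α, Injective f ∧ ∀ n, f n ∈ s n := by
  classical
  have avoid (n : ℕ) (t : Finset α) : ∃ y ∈ s n, y ∉ t :=
    ((hs n).sdiff t.finite_toSet).nonempty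
  choose g hgs hgt using avoid
  -- `used n` collects the values chosen at the indices below `n`
  let used : ℕ → Finset α := fun n => Nat.rec ∅ (fun k t => insert (g k t) t) n
  refine ⟨fun n => g n (used n), .of_lt_imp_ne fun m n hmn => ?_, fun n => hgs _ _⟩
  have mem_used : g m (used m) ∈ used n := by
    induction n, hmn using Nat.le_induction with
    | base => exact Finset.mem_insert_self _ _
    | succ k _ ih => exact Finset.mem_insert_of_mem ih
  exact fun h => hgt n (used n) (h ▸ mem_used)

theorem infinite_Icc_inter_ball {a b x δ : ℝ} (hab : a < b) (hx : x ∈ Icc a b) (hδ : 0 < δ) :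
    (Icc a b ∩ ball x δ).Infinite := by
  obtain ⟨y, hy⟩ : (ball x δ ∩ Ioo a b).Nonempty :=
    mem_closure_iff.1 ((closure_Ioo hab.ne).symm ▸ hx) _ isOpen_ball (mem_ball_self hδ)
  exact (infinite_of_mem_nhds y ((isOpen_ball.inter isOpen_Ioo).mem_nhds hy)).mono
    fun z hz => ⟨Ioo_subset_Icc_self hz.2, hz.1⟩

theorem IsClosed.exists_closure_range_eq {X : Type*} [TopologicalSpace X]
    [PseudoMetrizableSpace X] [SeparableSpace X] {T : Set X} (hTc : IsClosed T)
    (hT : T.Nonempty) : ∃ d : ℕ → X, closure (range d) = T := by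
  obtain ⟨t, htT, htc, hTt⟩ := (IsSeparable.of_separableSpace T).exists_countable_dense_subset
  obtain ⟨d, rfl⟩ := htc.exists_eq_range (closure_nonempty_iff.1 (hT.mono hTt))
  exact ⟨d, (closure_minimal htT hTc).antisymm hTt⟩

theorem setOf_mapClusterPt_unpair_fst {X : Type*} [TopologicalSpace X] (d : ℕ → X) :
    {p | MapClusterPt p atTop fun m : ℕ => d m.unpair.1} = closure (range d) := by
  refine Subset.antisymm (fun p hp => isClosed_closure.mem_of_mapClusterPt hp
    (Eventually.of_forall fun m => subset_closure (mem_range_self _))) ?_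
  refine closure_minimal ?_ isClosed_setOfPred_clusterPt
  rintro _ ⟨n, rfl⟩
  refine MapClusterPt.of_comp (tendsto_atTop_mono (Nat.right_le_pair n) tendsto_id) ?_
  simpa [comp_def] using (tendsto_const_nhds (x := d n)).mapClusterPt (F := atTop)

theorem MapClusterPt.of_tendsto_dist {X ι : Type*} [PseudoMetricSpace X] {l : Filter ι}
    {u v : ι → X} {p : X} (h : MapClusterPt p l u)
    (huv : Tendsto (fun i => dist (u i) (v i)) l (𝓝 0)) : MapClusterPt p l v := by
  rw [nhds_basis_ball.mapClusterPt_iff_frequently] at h ⊢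
  intro ε hε
  refine ((h (ε / 2) (half_pos hε)).and_eventually
    (huv.eventually (gt_mem_nhds (half_pos hε)))).mono fun i ⟨hu, huv⟩ => ?_
  calc dist (v i) p ≤ dist (u i) (v i) + dist (u i) p := dist_triangle_left _ _ _
    _ < ε / 2 + ε / 2 := add_lt_add huv hu
    _ = ε := add_halves ε

theorem mapClusterPt_iff_of_tendsto_dist {X ι : Type*} [PseudoMetricSpace X] {l : Filter ι}
    {u v : ι → X} {p : X} (huv : Tendsto (fun i => dist (u i) (v i)) l (𝓝 0)) :
    MapClusterPt p l u ↔ MapClusterPt p l v :=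
  ⟨(·.of_tendsto_dist huv), (·.of_tendsto_dist (by simpa only [dist_comm] using huv))⟩

theorem accPt_range_iff_mapClusterPt {X : Type*} [TopologicalSpace X] [T1Space X]
    {q : ℕ → X} (hq : Injective q) {p : X} :
    AccPt p (𝓟 (range q)) ↔ MapClusterPt p atTop q := by
  have infinite_iff (U : Set X) : (q ⁻¹' U).Infinite ↔ (U ∩ range q).Infinite := by
    rw [← infinite_image_iff hq.injOn, image_preimage_eq_inter_range]
  simp only [mapClusterPt_iff_frequently, Nat.frequently_atTop_iff_infinite]
  constructor
  · intro h U hU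
    refine (infinite_iff U).2 (Set.Infinite.of_accPt (x := p) (accPt_iff_frequently.2 ?_))
    exact ((accPt_iff_frequently.1 h).and_eventually hU).mono
      fun y ⟨⟨hne, hy⟩, hyU⟩ => ⟨hne, hyU, hy⟩
  · intro h
    refine accPt_iff_nhds.2 fun U hU => ?_
    obtain ⟨y, hy, hyp⟩ := (((infinite_iff U).1 (h U hU)).sdiff (finite_singleton p)).nonempty
    exact ⟨y, hy, hyp⟩

theorem graphOn_range_extend {ι : Type*} {a : ι → ℝ} (ha : Injective a) (g : ι → ℝ) :
    graphOn (range a) (extend a g 0) = range fun i => (a i, g i) := by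
  ext p
  constructor
  · rintro ⟨⟨i, hi⟩, hp⟩
    exact ⟨i, Prod.ext hi (by simp only [hp, ← hi, ha.extend_apply])⟩
  · rintro ⟨i, rfl⟩
    exact ⟨mem_range_self i, (ha.extend_apply g 0 i).symm⟩

theorem stmt0 (T : Set (ℝ × ℝ)) (hTc : IsClosed T)
    (hT : ∀ p ∈ T, p.1 ∈ Icc (0:ℝ) 1) :
    ∃ A : Set ℝ, A ⊆ Icc 0 1 ∧ A.Countable ∧
      ∃ f : ℝ → ℝ, accPts (graphOn A f) = T := by
  rcases T.eq_empty_or_nonempty with rfl | hTne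
  · exact ⟨∅, empty_subset _, countable_empty, 0, by ext p; simp [accPts, _root_.graphOn, AccPt]⟩
  obtain ⟨d, hdT⟩ := hTc.exists_closure_range_eq hTne
  set e : ℕ → ℝ × ℝ := fun m => d m.unpair.1
  have he (m : ℕ) : (e m).1 ∈ Icc (0:ℝ) 1 := hT _ (hdT ▸ subset_closure (mem_range_self _))
  obtain ⟨a, ha, haI⟩ : ∃ a : ℕ → ℝ, Injective a ∧
      ∀ m, a m ∈ Icc 0 1 ∩ ball (e m).1 (1 / (m + 1)) :=
    exists_injective_forall_mem_of_infinite fun m =>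
      infinite_Icc_inter_ball zero_lt_one (he m) Nat.one_div_pos_of_nat
  set q : ℕ → ℝ × ℝ := fun m => (a m, (e m).2)
  have hq : Injective q := fun m n h => ha (congrArg Prod.fst h)
  have hqe : Tendsto (fun m => dist (q m) (e m)) atTop (𝓝 0) := by
    refine squeeze_zero (fun _ => dist_nonneg) (fun m => ?_)
      tendsto_one_div_add_atTop_nhds_zero_nat
    rw [Prod.dist_eq, dist_self, max_eq_left dist_nonneg]
    exact (haI m).2.le
  refine ⟨range a, range_subset_iff.2 fun m => (haI m).1, countable_range a,
    extend a (fun m => (e m).2) 0, ?_⟩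
  ext p
  rw [accPts, graphOn_range_extend ha, mem_ofPred_eq, accPt_range_iff_mapClusterPt hq,
    mapClusterPt_iff_of_tendsto_dist hqe, ← hdT, ← setOf_mapClusterPt_unpair_fst]
  rfl
end
end

section
/- If f : [0,1] → ℝ is any function and L_f denotes the set of accumulation points of its graph in ℝ², then the set C = {x ∈ [0,1] : L_f ∩ ({x} × ℝ) = ∅} is countable. -/
/-!
For `x ∈ C` the point `(x, f x)` lies on the graph without being an accumulation point of it, so it
is an isolated point of the graph. The isolated points of any subset of a hereditarily Lindelöf
space (such as the plane) form a discrete, hence countable, set, and `C` lies in its projection to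
the first coordinate.
-/

open Set Filter Topology Metric

noncomputable section

theorem countable_setOf_not_accPt {X : Type*} [TopologicalSpace X] [HereditarilyLindelofSpace X]
    (s : Set X) : {x ∈ s | ¬AccPt x (𝓟 s)}.Countable := by
  refine (HereditarilyLindelofSpace.isLindelof _).countable_of_isDiscrete
    (isDiscrete_iff_nhdsNE.mpr ?_)
  rintro x ⟨-, hx⟩
  rw [AccPt, not_neBot] at hx
  exact le_bot_iff.mp <| hx ▸ inf_le_inf_left _ (principal_mono.mpr (sep_subset _ _))

theorem countable_setOf_graph_notMem_accPts (A : Set ℝ) (f : ℝ → ℝ) :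
    {x ∈ A | (x, f x) ∉ accPts (graphOn A f)}.Countable := by
  refine ((countable_setOf_not_accPt (graphOn A f)).image Prod.fst).mono ?_
  rintro x ⟨hx, hacc⟩
  exact ⟨(x, f x), ⟨⟨hx, rfl⟩, hacc⟩, rfl⟩

theorem stmt2 (f : ℝ → ℝ) :
    {x ∈ Icc (0:ℝ) 1 | ∀ y : ℝ, (x, y) ∉ accPts (graphOn (Icc 0 1) f)}.Countable := by
  refine (countable_setOf_graph_notMem_accPts (Icc 0 1) f).mono ?_
  rintro x ⟨hx, hacc⟩
  exact ⟨hx, hacc (f x)⟩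
end
end

section
/- There exists a (not necessarily bounded) Baire class 2 function f : [0,1] → ℝ with L_f = T if and only if T is closed and the set {x ∈ [0,1] : T ∩ ({x} × ℝ) = ∅} is countable. -/
/-!
Necessity: a derived set is closed, and if the fiber of `L_f` over `x` is empty then
`|f t| → ∞` as `t → x` by compactness, so `x` is a strict local minimum of `|f|`; a second
countable space has only countably many strict local minima.

Sufficiency: on the countable set `E` of empty fibers let `f` take distinct natural values, which
creates no accumulation points; on an injective sequence `u` in `[0, 1] \ E` let the graph pass
through points `(u j, v j)` whose derived set is exactly `T`; elsewhere let `f` be a selection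
`φ x` of the fiber `T_x`. Choosing for `φ x` the least point of `T_x ∩ [-i, i]` for the first `i`
for which it is nonempty makes `φ` a pointwise limit of Baire-1 functions (lower semicontinuous
functions, approximated by Pasch–Hausdorff envelopes, glued along closed sets). Finally, a
pointwise limit of Baire-1 functions off a countable set is Baire 2 whatever its values on that
set, since finitely many point values can be changed within Baire class 1.
-/

open Set Filter Topology Metric

noncomputable section

lemma Continuous.baire1 {f : ℝ → ℝ} (hf : Continuous f) : Baire1 f :=
  ⟨fun _ => f, fun _ => hf.continuousOn, fun _ _ => tendsto_const_nhds⟩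

lemma Baire1.comp₂ {F : ℝ → ℝ → ℝ} (hF : Continuous (Function.uncurry F)) {f g : ℝ → ℝ}
    (hf : Baire1 f) (hg : Baire1 g) : Baire1 fun x => F (f x) (g x) := by
  obtain ⟨f', hf'c, hf'⟩ := hf
  obtain ⟨g', hg'c, hg'⟩ := hg
  exact ⟨fun n x => F (f' n x) (g' n x), fun n => hF.comp_continuousOn ((hf'c n).prodMk (hg'c n)),
    fun x hx => (hF.tendsto _).comp ((hf' x hx).prodMk_nhds (hg' x hx))⟩

lemma IsClosed.baire1_indicator_one {K : Set ℝ} (hK : IsClosed K) : Baire1 (K.indicator 1) := by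
  have hδ : ∀ n : ℕ, (0 : ℝ) < 1 / (n + 1) := fun n => Nat.one_div_pos_of_nat
  refine ⟨fun n x => thickenedIndicator (hδ n) K x,
    fun n => (NNReal.continuous_coe.comp (thickenedIndicator (hδ n) K).continuous).continuousOn,
    fun x _ => ?_⟩
  have h := tendsto_pi_nhds.1
    (thickenedIndicator_tendsto_indicator_closure hδ tendsto_one_div_add_atTop_nhds_zero_nat K) x
  rw [hK.closure_eq] at h
  convert NNReal.tendsto_coe.2 h using 1
  by_cases hx : x ∈ K <;> simp [hx]

lemma Baire1.piecewise {K : Set ℝ} [DecidablePred (· ∈ K)] (hK : IsClosed K) {f g : ℝ → ℝ}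
    (hf : Baire1 f) (hg : Baire1 g) : Baire1 (K.piecewise f g) := by
  have hχ := hK.baire1_indicator_one
  have h : K.piecewise f g =
      fun x => K.indicator 1 x * f x + (1 - K.indicator 1 x) * g x := by
    ext x; by_cases hx : x ∈ K <;> simp [hx]
  rw [h]
  exact (hχ.comp₂ (F := (· * ·)) (by fun_prop) hf).comp₂ (F := (· + ·)) (by fun_prop)
    (hχ.comp₂ (F := fun a b => (1 - a) * b) (by fun_prop) hg)

lemma Baire1.update {f : ℝ → ℝ} (hf : Baire1 f) (a b : ℝ) : Baire1 (Function.update f a b) := by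
  rw [← Set.piecewise_singleton a (fun _ => b) f]
  exact continuous_const.baire1.piecewise isClosed_singleton hf

lemma Baire1.finset_piecewise {f g : ℝ → ℝ} (hg : Baire1 g) (s : Finset ℝ) :
    Baire1 (s.piecewise f g) := by
  induction s using Finset.induction_on with
  | empty => rwa [Finset.piecewise_empty]
  | insert a s _ ih =>
    rw [Finset.piecewise_insert]
    exact ih.update _ _

theorem baire2_of_tendsto_of_countable {τ : ℕ → ℝ → ℝ} {f : ℝ → ℝ} {C : Set ℝ}
    (hτ : ∀ j, Baire1 (τ j)) (hC : C.Countable)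
    (hlim : ∀ x ∈ Icc (0 : ℝ) 1, x ∉ C → Tendsto (fun j => τ j x) atTop (𝓝 (f x))) :
    Baire2 f := by
  obtain ⟨w, hw⟩ := Set.countable_iff_exists_subset_range.1 hC
  refine ⟨fun j => ((Finset.range j).image w).piecewise f (τ j),
    fun j => (hτ j).finset_piecewise _, fun x hx => ?_⟩
  by_cases hxw : x ∈ range w
  · obtain ⟨m, rfl⟩ := hxw
    refine tendsto_atTop_of_eventually_const (i₀ := m + 1) fun j hj => ?_
    exact Finset.piecewise_eq_of_mem _ _ _ (Finset.mem_image_of_mem w (Finset.mem_range.2 hj))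
  · refine (hlim x hx fun h => hxw (hw h)).congr fun j => ?_
    refine (Finset.piecewise_eq_of_notMem _ _ _ fun h => hxw ?_).symm
    obtain ⟨m, -, rfl⟩ := Finset.mem_image.1 h
    exact mem_range_self m

section PaschHausdorff

variable {X : Type*} [PseudoMetricSpace X] {g : X → ℝ} {B : ℝ}

/-- The largest `k`-Lipschitz minorant of `g` (for `g` bounded below). -/
def paschHausdorff (g : X → ℝ) (k : ℝ) (x : X) : ℝ := ⨅ x', g x' + k * dist x x'

lemma bddBelow_range_add_mul_dist (hB : ∀ x, B ≤ g x) {k : ℝ} (hk : 0 ≤ k) (x : X) :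
    BddBelow (range fun x' => g x' + k * dist x x') :=
  ⟨B, by rintro _ ⟨x', rfl⟩; nlinarith [hB x', dist_nonneg (x := x) (y := x')]⟩

lemma paschHausdorff_le (hB : ∀ x, B ≤ g x) {k : ℝ} (hk : 0 ≤ k) (x : X) :
    paschHausdorff g k x ≤ g x :=
  (ciInf_le (bddBelow_range_add_mul_dist hB hk x) x).trans_eq (by simp)

lemma paschHausdorff_le_add_mul (hB : ∀ x, B ≤ g x) {k : ℝ} (hk : 0 ≤ k) (x y : X) :
    paschHausdorff g k x ≤ paschHausdorff g k y + k * dist x y := by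
  have : Nonempty X := ⟨y⟩
  rw [← sub_le_iff_le_add]
  refine le_ciInf fun x' => ?_
  have h := ciInf_le (bddBelow_range_add_mul_dist hB hk x) x'
  have := dist_triangle x y x'
  dsimp only [paschHausdorff] at h ⊢
  nlinarith

lemma continuous_paschHausdorff (hB : ∀ x, B ≤ g x) (n : ℕ) :
    Continuous (paschHausdorff g n) :=
  (LipschitzWith.of_le_add_mul (n : NNReal) fun x y => by
    simpa using paschHausdorff_le_add_mul hB n.cast_nonneg x y).continuous

lemma LowerSemicontinuous.tendsto_paschHausdorff (hg : LowerSemicontinuous g)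
    (hB : ∀ x, B ≤ g x) (x : X) :
    Tendsto (fun n : ℕ => paschHausdorff g n x) atTop (𝓝 (g x)) := by
  have : Nonempty X := ⟨x⟩
  refine tendsto_order.2 ⟨fun a ha => ?_, fun a ha => Eventually.of_forall fun n =>
    (paschHausdorff_le hB n.cast_nonneg x).trans_lt ha⟩
  obtain ⟨b, hab, hb⟩ := exists_between ha
  obtain ⟨δ, hδ, hball⟩ := Metric.eventually_nhds_iff.1 (hg x b hb)
  obtain ⟨N, hN⟩ := exists_nat_gt ((b - B) / δ)
  filter_upwards [eventually_ge_atTop N] with n hn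
  refine hab.trans_le (le_ciInf fun x' => ?_)
  have hn' : (b - B) / δ < n := hN.trans_le (Nat.cast_le.2 hn)
  rw [div_lt_iff₀ hδ] at hn'
  have hd := dist_nonneg (x := x) (y := x')
  by_cases hx' : dist x' x < δ
  · nlinarith [hball hx', n.cast_nonneg (α := ℝ)]
  · rw [dist_comm] at hx'
    nlinarith [hB x', n.cast_nonneg (α := ℝ)]

lemma LowerSemicontinuous.baire1 {g : ℝ → ℝ} (hg : LowerSemicontinuous g) (hB : ∀ x, B ≤ g x) :
    Baire1 g :=
  ⟨fun n => paschHausdorff g n, fun n => (continuous_paschHausdorff hB n).continuousOn,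
    fun x _ => hg.tendsto_paschHausdorff hB x⟩

end PaschHausdorff

section FiberInf

variable {X : Type*} [TopologicalSpace X] {S : Set (X × ℝ)}

/-- The least point of the fiber of `S` over `x`, capped at `b`; the cap keeps the set nonempty,
so that empty fibers give `b` rather than the junk value `sInf ∅`. -/
def fiberInf (S : Set (X × ℝ)) (b : ℝ) (x : X) : ℝ := sInf (insert b {y | (x, y) ∈ S})

lemma IsCompact.bddBelow_insert_fiber (hS : IsCompact S) (b : ℝ) (x : X) :
    BddBelow (insert b {y | (x, y) ∈ S}) :=
  ((hS.image continuous_snd).bddBelow.mono fun y (hy : (x, y) ∈ S) =>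
    mem_image_of_mem Prod.snd hy).insert b

lemma fiberInf_le_of_mem (hS : IsCompact S) (b : ℝ) {x : X} {y : ℝ} (hxy : (x, y) ∈ S) :
    fiberInf S b x ≤ y :=
  csInf_le (hS.bddBelow_insert_fiber b x) (mem_insert_of_mem b hxy)

lemma fiberInf_le (hS : IsCompact S) (b : ℝ) (x : X) : fiberInf S b x ≤ b :=
  csInf_le (hS.bddBelow_insert_fiber b x) (mem_insert b _)

variable [T2Space X]

lemma fiberInf_mem (hS : IsCompact S) (b : ℝ) (x : X) :
    fiberInf S b x ∈ insert b {y | (x, y) ∈ S} :=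
  (insert_eq b _ ▸ isClosed_singleton.union
    (hS.isClosed.preimage (Continuous.prodMk_right x))).csInf_mem
    (insert_nonempty _ _) (hS.bddBelow_insert_fiber b x)

lemma lowerSemicontinuous_fiberInf (hS : IsCompact S) (b : ℝ) :
    LowerSemicontinuous (fiberInf S b) := by
  refine lowerSemicontinuous_iff_isClosed_preimage.2 fun c => ?_
  rcases le_or_gt b c with hbc | hcb
  · convert isClosed_univ
    exact eq_univ_of_forall fun x => (fiberInf_le hS b x).trans hbc
  · convert ((hS.inter_right (isClosed_univ.prod isClosed_Iic)).image continuous_fst).isClosed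
    ext x
    constructor
    · intro hx
      rcases fiberInf_mem hS b x with h | h
      · exact absurd (h ▸ hx : b ≤ c) hcb.not_ge
      · exact ⟨(x, fiberInf S b x), ⟨h, trivial, hx⟩, rfl⟩
    · rintro ⟨⟨x, y⟩, ⟨hxy, -, hyc⟩, rfl⟩
      exact (fiberInf_le_of_mem hS b hxy).trans hyc

end FiberInf

theorem exists_baire1_glue {K : ℕ → Set ℝ} {g : ℕ → ℝ → ℝ} (hK : ∀ i, IsClosed (K i))
    (hKmono : Monotone K) (hg : ∀ i, Baire1 (g i)) :
    ∃ τ : ℕ → ℝ → ℝ, (∀ j, Baire1 (τ j)) ∧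
      ∀ N x, x ∈ K N → (∃ i, x ∈ K i ∧ τ N x = g i x) ∧ ∀ j ≥ N, τ j x = τ N x := by
  classical
  -- `τ j x = g i x` for the least `i ≤ j` with `x ∈ K i`, if there is one
  let τ : ℕ → ℝ → ℝ := fun j => Nat.rec (motive := fun _ => ℝ → ℝ) (g 0)
    (fun j τj => (K j).piecewise τj (g (j + 1))) j
  refine ⟨τ, fun j => ?_, fun N x hx => ⟨?_, fun j hj => ?_⟩⟩
  · induction j with
    | zero => exact hg 0
    | succ j ih => exact ih.piecewise (hK j) (hg (j + 1))
  · induction N with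
    | zero => exact ⟨0, hx, rfl⟩
    | succ N ih =>
      by_cases hxN : x ∈ K N
      · obtain ⟨i, hi, h⟩ := ih hxN
        exact ⟨i, hi, (Set.piecewise_eq_of_mem _ _ _ hxN).trans h⟩
      · exact ⟨N + 1, hx, Set.piecewise_eq_of_notMem _ _ _ hxN⟩
  · induction j, hj using Nat.le_induction with
    | base => rfl
    | succ j hj ih => exact (Set.piecewise_eq_of_mem _ _ _ (hKmono hj hx)).trans ih

theorem exists_baire1_tendsto_mem_fiber {T : Set (ℝ × ℝ)} (hT : ∀ p ∈ T, p.1 ∈ Icc (0 : ℝ) 1)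
    (hTc : IsClosed T) :
    ∃ (τ : ℕ → ℝ → ℝ) (φ : ℝ → ℝ), (∀ j, Baire1 (τ j)) ∧
      ∀ x y, (x, y) ∈ T → Tendsto (fun j => τ j x) atTop (𝓝 (φ x)) ∧ (x, φ x) ∈ T := by
  set S : ℕ → Set (ℝ × ℝ) := fun i => T ∩ univ ×ˢ Icc (-(i : ℝ)) i
  have hS : ∀ i, IsCompact (S i) := fun i =>
    (isCompact_Icc.prod isCompact_Icc).of_isClosed_subset
      (hTc.inter (isClosed_univ.prod isClosed_Icc)) fun p hp => ⟨hT p hp.1, hp.2.2⟩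
  set K : ℕ → Set ℝ := fun i => Prod.fst '' S i
  have hKmono : Monotone K := fun i j hij => by
    have : (i : ℝ) ≤ j := Nat.cast_le.2 hij
    exact image_mono (inter_subset_inter_right _
      (prod_mono subset_rfl (Icc_subset_Icc (neg_le_neg this) this)))
  set g : ℕ → ℝ → ℝ := fun i => fiberInf (S i) (i + 1)
  have hg : ∀ i, Baire1 (g i) := fun i =>
    (lowerSemicontinuous_fiberInf (hS i) _).baire1 (B := -i) fun x => by
      rcases fiberInf_mem (hS i) (i + 1) x with h | h
      · rw [h]; linarith
      · exact h.2.2.1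
  have hgT : ∀ i x, x ∈ K i → (x, g i x) ∈ T := by
    rintro i _ ⟨⟨x, y⟩, hxy, rfl⟩
    rcases fiberInf_mem (hS i) (i + 1) x with h | h
    · have hle := fiberInf_le_of_mem (hS i) (i + 1) hxy
      rw [h] at hle
      exfalso
      linarith [hxy.2.2.2]
    · exact h.1
  obtain ⟨τ, hτ, hτK⟩ :=
    exists_baire1_glue (fun i => ((hS i).image continuous_fst).isClosed) hKmono hg
  refine ⟨τ, fun x => limUnder atTop fun j => τ j x, hτ, fun x y hxy => ?_⟩
  obtain ⟨N, hN⟩ := exists_nat_ge |y|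
  obtain ⟨⟨i, hi, hτg⟩, hconst⟩ := hτK N x ⟨(x, y), ⟨hxy, trivial, abs_le.1 hN⟩, rfl⟩
  have hlim : Tendsto (fun j => τ j x) atTop (𝓝 (τ N x)) :=
    tendsto_atTop_of_eventually_const hconst
  simp only [hlim.limUnder_eq]
  exact ⟨hlim, hτg ▸ hgT i x hi⟩

theorem countable_setOf_eventually_lt {X α : Type*} [TopologicalSpace X]
    [SecondCountableTopology X] [Preorder α] (g : X → α) (A : Set X) :
    {x ∈ A | ∀ᶠ t in 𝓝[A \ {x}] x, g x < g t}.Countable := by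
  have key : ∀ x ∈ {x ∈ A | ∀ᶠ t in 𝓝[A \ {x}] x, g x < g t},
      ∃ V ∈ TopologicalSpace.countableBasis X, x ∈ V ∧ ∀ t ∈ V ∩ (A \ {x}), g x < g t := by
    rintro x ⟨-, hx⟩
    obtain ⟨U, hUo, hxU, hU⟩ := mem_nhdsWithin.1 hx
    obtain ⟨V, hV, hxV, hVU⟩ :=
      (TopologicalSpace.isBasis_countableBasis X).exists_subset_of_mem_open hxU hUo
    exact ⟨V, hV, hxV, fun t ht => hU ⟨hVU ht.1, ht.2⟩⟩
  choose! V hVB hxV hV using key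
  refine MapsTo.countable_of_injOn hVB (fun x hx x' hx' hxx' => ?_)
    (TopologicalSpace.countable_countableBasis X)
  by_contra hne
  exact lt_asymm (hV x hx x' ⟨hxx' ▸ hxV x' hx', hx'.1, Ne.symm hne⟩)
    (hV x' hx' x ⟨hxx' ▸ hxV x hx, hx.1, hne⟩)

theorem tendsto_abs_atTop_of_forall_notMem_accPts {f : ℝ → ℝ} {A : Set ℝ} {x : ℝ}
    (h : ∀ y, (x, y) ∉ accPts (graphOn A f)) :
    Tendsto (fun t => |f t|) (𝓝[A \ {x}] x) atTop := by
  refine tendsto_atTop.2 fun M => ?_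
  by_contra hM
  set l := 𝓝[A \ {x}] x ⊓ 𝓟 {t | ¬ M ≤ |f t|}
  have : l.NeBot := frequently_iff_neBot.1 (not_eventually.1 hM)
  have hF : map (fun t => (t, f t)) l ≤ 𝓟 (closedBall x 1 ×ˢ Icc (-M) M) := by
    refine le_principal_iff.2 (mem_map.2 ?_)
    filter_upwards [mem_inf_of_left (mem_nhdsWithin_of_mem_nhds (closedBall_mem_nhds x one_pos)),
      mem_inf_of_right (mem_principal_self _)] with t ht hft
    exact ⟨ht, abs_le.1 (not_le.1 hft).le⟩
  obtain ⟨⟨x', y⟩, -, ha⟩ := ((isCompact_closedBall x 1).prod isCompact_Icc).exists_clusterPt hF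
  obtain rfl : x' = x := eq_of_nhds_neBot <| (ha.map continuous_fst.continuousAt tendsto_map).mono
    (map_map.trans_le (inf_le_left.trans nhdsWithin_le_nhds))
  refine h y (accPt_principal_iff_clusterPt.2 (ha.mono (le_principal_iff.2 (mem_map.2 ?_))))
  filter_upwards [mem_inf_of_left self_mem_nhdsWithin] with t ht
  exact ⟨⟨ht.1, rfl⟩, fun hty => ht.2 (congrArg Prod.fst hty)⟩

theorem countable_setOf_forall_notMem_accPts (f : ℝ → ℝ) (A : Set ℝ) :
    {x ∈ A | ∀ y, (x, y) ∉ accPts (graphOn A f)}.Countable := by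
  refine (countable_setOf_eventually_lt (fun t => |f t|) A).mono ?_
  rintro x ⟨hxA, hx⟩
  exact ⟨hxA, (tendsto_abs_atTop_of_forall_notMem_accPts hx).eventually_gt_atTop _⟩

theorem exists_injective_forall_mem {α : Type*} (S : ℕ → Set α) (hS : ∀ j, (S j).Infinite) :
    ∃ u : ℕ → α, Function.Injective u ∧ ∀ j, u j ∈ S j := by
  classical
  choose c hcS hcF using fun j (F : Finset α) => (hS j).exists_notMem_finset F
  -- `F n` collects the first `n` choices, and `u n` is chosen outside it
  let F : ℕ → Finset α := fun n => Nat.rec ∅ (fun n Fn => insert (c n Fn) Fn) n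
  have hF : ∀ i n, i < n → c i (F i) ∈ F n := fun i n hin =>
    monotone_nat_of_le_succ (fun n => Finset.subset_insert _ (F n)) hin
      (Finset.mem_insert_self _ (F i))
  refine ⟨fun n => c n (F n), fun i j (hij : c i (F i) = c j (F j)) => ?_, fun n => hcS _ _⟩
  by_contra hne
  rcases lt_or_gt_of_ne hne with h | h
  · exact hcF j (F j) (hij ▸ hF i j h)
  · exact hcF i (F i) (hij ▸ hF j i h)

section OpenUncountable

variable {E : Type*} [NormedAddCommGroup E] [NormedSpace ℝ E] [Nontrivial E] {s : Set E}

lemma IsOpen.not_countable (hs : IsOpen s) (hne : s.Nonempty) : ¬ s.Countable :=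
  fun h => (Cardinal.aleph0_lt_continuum.trans_le
    (continuum_le_cardinal_of_isOpen ℝ hs hne)).not_ge h.le_aleph0

lemma IsOpen.infinite_diff (hs : IsOpen s) (hne : s.Nonempty) {C : Set E} (hC : C.Countable) :
    (s \ C).Infinite :=
  fun h => hs.not_countable hne ((h.countable.union hC).mono (subset_sdiff_union s C))

end OpenUncountable

lemma Function.Injective.accPt_range_of_tendsto {X : Type*} [TopologicalSpace X] {z : ℕ → X} {p : X}
    (hz : Function.Injective z) (h : Tendsto z atTop (𝓝 p)) : AccPt p (𝓟 (range z)) := by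
  have hne : ∀ᶠ n in atTop, z n ≠ p :=
    Nat.cofinite_eq_atTop ▸ hz.tendsto_cofinite.eventually (eventually_cofinite_ne p)
  exact accPt_iff_frequently.2
    (h.frequently (hne.mono fun n hn => ⟨hn, mem_range_self n⟩).frequently)

lemma derivedSet_range_subset_of_tendsto_dist {X : Type*} [MetricSpace X] {T : Set X}
    (hT : IsClosed T) {P Q : ℕ → X} (hQ : ∀ j, Q j ∈ T) (hPQ : Tendsto (fun j => dist (P j) (Q j)) atTop (𝓝 0)) :
    derivedSet (range P) ⊆ T := by
  intro p hp
  by_contra hpT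
  obtain ⟨r, hr, hball⟩ := Metric.mem_nhds_iff.1 (hT.isOpen_compl.mem_nhds hpT)
  obtain ⟨J, hJ⟩ := eventually_atTop.1 (hPQ.eventually (gt_mem_nhds (half_pos hr)))
  refine Set.Infinite.of_accPt (hp.nhds_inter (ball_mem_nhds p (half_pos hr)))
    (((finite_Iio J).image P).subset ?_)
  rintro _ ⟨hjp, j, rfl⟩
  refine ⟨j, mem_Iio.2 (not_le.1 fun hj => hball ?_ (hQ j)), rfl⟩
  have := dist_triangle (Q j) (P j) p
  rw [dist_comm (Q j) (P j)] at this
  rw [mem_ball] at hjp ⊢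
  linarith [hJ j hj]

lemma not_accPt_image_natCast {E : Set ℝ} {ι : ℝ → ℕ} (hι : InjOn ι E) (p : ℝ × ℝ) :
    ¬ AccPt p (𝓟 ((fun x => (x, (ι x : ℝ))) '' E)) := by
  intro hp
  set N := ⌈p.2 + 1⌉₊
  have hfin : {x ∈ E | ι x < N}.Finite :=
    ((finite_Iio N).subset (image_subset_iff.2 fun x hx => hx.2)).of_finite_image
      (hι.mono (sep_subset _ _))
  refine Set.Infinite.of_accPt (hp.nhds_inter (ball_mem_nhds p one_pos))
    ((hfin.image fun x => (x, (ι x : ℝ))).subset ?_)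
  rintro _ ⟨hball, x, hxE, rfl⟩
  refine ⟨x, ⟨hxE, ?_⟩, rfl⟩
  simp only [mem_ball, Prod.dist_eq, max_lt_iff, Real.dist_eq, abs_lt] at hball
  exact Nat.lt_ceil.2 (by linarith [hball.2.2])

theorem exists_injective_derivedSet_range_eq {T : Set (ℝ × ℝ)}
    (hT : ∀ p ∈ T, p.1 ∈ Icc (0 : ℝ) 1) (hTc : IsClosed T) (hTne : T.Nonempty)
    {E : Set ℝ} (hE : E.Countable) :
    ∃ u v : ℕ → ℝ, Function.Injective u ∧ (∀ j, u j ∈ Icc 0 1 \ E) ∧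
      derivedSet (range fun j => (u j, v j)) = T := by
  have : Nonempty T := hTne.to_subtype
  obtain ⟨A, hA⟩ := TopologicalSpace.exists_dense_seq T
  set Q : ℕ → ℝ × ℝ := fun j => A j.unpair.1
  have hQ : ∀ j, Q j ∈ T := fun j => (A _).2
  have hS : ∀ j : ℕ, (Ioo (0 : ℝ) 1 ∩ ball (Q j).1 (1 / (j + 1))).Nonempty := fun j => by
    have : (Q j).1 ∈ closure (Ioo (0 : ℝ) 1) := (closure_Ioo (zero_ne_one' ℝ)).symm ▸ hT _ (hQ j)
    obtain ⟨b, hb, hdist⟩ := Metric.mem_closure_iff.1 this _ Nat.one_div_pos_of_nat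
    exact ⟨b, hb, mem_ball'.2 hdist⟩
  obtain ⟨u, hu_inj, hu⟩ := exists_injective_forall_mem
    (fun j : ℕ => (Ioo (0 : ℝ) 1 ∩ ball (Q j).1 (1 / (j + 1))) \ E) fun j =>
      (isOpen_Ioo.inter isOpen_ball).infinite_diff (hS j) hE
  set P : ℕ → ℝ × ℝ := fun j => (u j, (Q j).2)
  have hPQ : ∀ j, dist (P j) (Q j) ≤ 1 / (j + 1) := fun j => by
    rw [Prod.dist_eq, dist_self, max_eq_left dist_nonneg]
    exact (hu j).1.2.le
  refine ⟨u, fun j => (Q j).2, hu_inj, fun j => ⟨Ioo_subset_Icc_self (hu j).1.1, (hu j).2⟩,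
    Subset.antisymm (derivedSet_range_subset_of_tendsto_dist hTc hQ
      (squeeze_zero (fun _ => dist_nonneg) hPQ tendsto_one_div_add_atTop_nhds_zero_nat)) ?_⟩
  have hAacc : ∀ n, (A n : ℝ × ℝ) ∈ derivedSet (range P) := fun n => by
    have hz : Tendsto (fun k => P (Nat.pair n k)) atTop (𝓝 (A n)) := by
      refine tendsto_iff_dist_tendsto_zero.2 (squeeze_zero (fun _ => dist_nonneg) (fun k => ?_)
        tendsto_one_div_add_atTop_nhds_zero_nat)
      have := hPQ (Nat.pair n k)
      simp only [Q, Nat.unpair_pair] at this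
      exact this.trans (Nat.one_div_le_one_div (Nat.right_le_pair n k))
    exact (Function.Injective.accPt_range_of_tendsto (fun k k' h => (Nat.pair_eq_pair.1
      (hu_inj (congrArg Prod.fst h))).2) hz).mono (principal_mono.2 (range_comp_subset_range _ P))
  calc T ⊆ closure (Subtype.val '' range A) := Subtype.dense_iff.1 hA
    _ ⊆ derivedSet (range P) := (isClosed_derivedSet _).closure_subset_iff.2
      (by rintro _ ⟨_, ⟨n, rfl⟩, rfl⟩; exact hAacc n)

lemma nonempty_of_countable_setOf_forall_notMem {T : Set (ℝ × ℝ)}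
    (hE : {x ∈ Icc (0 : ℝ) 1 | ∀ y : ℝ, (x, y) ∉ T}.Countable) : T.Nonempty := by
  obtain ⟨x, hx, hxE⟩ := (isOpen_Ioo.infinite_diff (nonempty_Ioo.2 one_pos) hE).nonempty
  obtain ⟨y, hy⟩ := not_forall_not.1 fun h => hxE ⟨Ioo_subset_Icc_self hx, h⟩
  exact ⟨_, hy⟩

theorem exists_baire2_accPts_graphOn_eq {T : Set (ℝ × ℝ)} (hT : ∀ p ∈ T, p.1 ∈ Icc (0 : ℝ) 1)
    (hTc : IsClosed T) (hE : {x ∈ Icc (0 : ℝ) 1 | ∀ y : ℝ, (x, y) ∉ T}.Countable) :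
    ∃ f : ℝ → ℝ, Baire2 f ∧ accPts (graphOn (Icc 0 1) f) = T := by
  classical
  set E := {x ∈ Icc (0 : ℝ) 1 | ∀ y : ℝ, (x, y) ∉ T}
  have hfiber : ∀ x ∈ Icc (0 : ℝ) 1, x ∉ E → ∃ y, (x, y) ∈ T := fun x hx hxE =>
    not_forall_not.1 fun h => hxE ⟨hx, h⟩
  obtain ⟨u, v, hu_inj, hu, huv⟩ := exists_injective_derivedSet_range_eq hT hTc
    (nonempty_of_countable_setOf_forall_notMem hE) hE
  obtain ⟨ι, hι⟩ := countable_iff_exists_injOn.1 hE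
  obtain ⟨τ, φ, hτ, hφ⟩ := exists_baire1_tendsto_mem_fiber hT hTc
  set f : ℝ → ℝ := fun x => if x ∈ E then ι x else Function.extend u v φ x
  have hfφ : ∀ x, x ∉ E ∪ range u → f x = φ x := fun x hx => by
    simp only [f, if_neg fun h => hx (Or.inl h)]
    exact Function.extend_apply' _ _ _ fun ⟨j, hj⟩ => hx (Or.inr ⟨j, hj⟩)
  have hfu : ∀ j, f (u j) = v j := fun j => by
    simp only [f, if_neg (hu j).2, hu_inj.extend_apply]
  refine ⟨f, baire2_of_tendsto_of_countable hτ (hE.union (countable_range u))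
    fun x hx hxC => ?_, Subset.antisymm ?_ (huv ▸ derivedSet_mono _ _ ?_)⟩
  · obtain ⟨y, hy⟩ := hfiber x hx fun h => hxC (Or.inl h)
    exact hfφ x hxC ▸ (hφ x y hy).1
  · have hsub : graphOn (Icc 0 1) f ⊆
        ((fun x => (x, (ι x : ℝ))) '' E ∪ range fun j => (u j, v j)) ∪ T := by
      rintro ⟨x, y⟩ ⟨hx, rfl : y = f x⟩
      by_cases hxE : x ∈ E
      · exact Or.inl (Or.inl ⟨x, hxE, by simp [f, hxE]⟩)
      by_cases hxu : x ∈ range u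
      · obtain ⟨j, rfl⟩ := hxu
        exact Or.inl (Or.inr ⟨j, by simp [hfu]⟩)
      obtain ⟨y, hy⟩ := hfiber x hx hxE
      exact Or.inr (hfφ x (by simp [hxE, hxu]) ▸ (hφ x y hy).2)
    refine (derivedSet_mono _ _ hsub).trans ?_
    rw [derivedSet_union, derivedSet_union, huv]
    exact union_subset (union_subset (fun p hp => absurd hp (not_accPt_image_natCast hι p))
      subset_rfl) ((isClosed_iff_derivedSet_subset T).1 hTc)
  · rintro _ ⟨j, rfl⟩
    exact ⟨(hu j).1, (hfu j).symm⟩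

theorem stmt8 (T : Set (ℝ × ℝ)) (hT : ∀ p ∈ T, p.1 ∈ Icc (0:ℝ) 1) :
    (∃ f : ℝ → ℝ, Baire2 f ∧ accPts (graphOn (Icc 0 1) f) = T) ↔
      (IsClosed T ∧ {x ∈ Icc (0:ℝ) 1 | ∀ y : ℝ, (x, y) ∉ T}.Countable) := by
  constructor
  · rintro ⟨f, -, rfl⟩
    exact ⟨isClosed_derivedSet _, countable_setOf_forall_notMem_accPts f _⟩
  · rintro ⟨hTc, hE⟩
    exact exists_baire2_accPts_graphOn_eq hT hTc hE
end
end

section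
/- Let f : [0,1] → ℝ be a Baire class 1 function. Then its graph G is the intersection of a countable sequence of open strips, i.e., there exist open sets Sₙ ⊆ ℝ² with every vertical section Sₙ(x) an open interval, such that ⋂ₙ Sₙ = G. -/
open Set Filter Topology Metric

noncomputable section

/-!
After extending the approximating continuous functions `gₘ` from `[0,1]` to `ℝ`, take the `n`-th
strip to be the set of `(x, y)` with `x` in the `n`-th open set of a Gδ description of `[0,1]` and
`gₘ x - εₙ < y < gₘ' x + εₙ` for some `m, m' ≥ n`, where `εₙ → 0`. It is open, being a union of sets
cut out by continuous strict inequalities, and its vertical sections are convex, being the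
intersection of an up-set and a down-set. A point lying in every strip lies over `[0,1]`, and
picking such `m ≥ n` for every `n` squeezes `y` from both sides between sequences tending to `f x`.
-/

lemma le_of_forall_exists_ge_sub_lt {u ε : ℕ → ℝ} {a y : ℝ} (hu : Tendsto u atTop (𝓝 a))
    (hε : Tendsto ε atTop (𝓝 0)) (h : ∀ n, ∃ m ≥ n, u m - ε n < y) : a ≤ y := by
  choose m hm hlt using h
  have hm_tendsto : Tendsto m atTop atTop := tendsto_atTop_mono hm tendsto_id
  have hlim : Tendsto (fun n => u (m n) - ε n) atTop (𝓝 (a - 0)) :=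
    (hu.comp hm_tendsto).sub hε
  rw [sub_zero] at hlim
  exact le_of_tendsto' hlim fun n => (hlt n).le

section GraphStrip

variable {X : Type*}

def graphStrip (V : Set X) (g : ℕ → X → ℝ) (n : ℕ) (ε : ℝ) : Set (X × ℝ) :=
  {p | p.1 ∈ V ∧ (∃ m ≥ n, g m p.1 - ε < p.2) ∧ ∃ m ≥ n, p.2 < g m p.1 + ε}

lemma ordConnected_graphStrip_section (V : Set X) (g : ℕ → X → ℝ) (n : ℕ) (ε : ℝ) (x : X) :
    {y | (x, y) ∈ graphStrip V g n ε}.OrdConnected :=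
  ⟨fun _ ⟨hx, ⟨m₁, hm₁, h₁⟩, _⟩ _ ⟨_, _, ⟨m₂, hm₂, h₂⟩⟩ _ hy =>
    ⟨hx, ⟨m₁, hm₁, h₁.trans_le hy.1⟩, ⟨m₂, hm₂, hy.2.trans_lt h₂⟩⟩⟩

lemma iInter_graphStrip_eq {V : ℕ → Set X} {g : ℕ → X → ℝ} {f : X → ℝ}
    (hgf : ∀ x ∈ ⋂ n, V n, Tendsto (g · x) atTop (𝓝 (f x))) :
    ⋂ n, graphStrip (V n) g n (1 / (n + 1)) = {p | p.1 ∈ ⋂ n, V n ∧ p.2 = f p.1} := by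
  have hε : Tendsto (fun n : ℕ => 1 / ((n : ℝ) + 1)) atTop (𝓝 0) :=
    tendsto_one_div_add_atTop_nhds_zero_nat
  ext ⟨x, y⟩
  simp only [graphStrip, mem_iInter, mem_ofPred_eq]
  constructor
  · intro h
    have hlim := hgf x (mem_iInter.2 fun n => (h n).1)
    refine ⟨fun n => (h n).1, le_antisymm ?_ ?_⟩
    · refine neg_le_neg_iff.1 (le_of_forall_exists_ge_sub_lt hlim.neg hε fun n => ?_)
      obtain ⟨m, hm, hlt⟩ := (h n).2.2
      exact ⟨m, hm, by linarith⟩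
    · exact le_of_forall_exists_ge_sub_lt hlim hε fun n => (h n).2.1
  · rintro ⟨hx, rfl⟩ n
    have hclose : ∀ᶠ m in atTop, |g m x - f x| < 1 / (n + 1) :=
      (hgf x (mem_iInter.2 hx)).sub_const (f x) |>.abs |>.eventually
        (gt_mem_nhds (by rw [sub_self, abs_zero]; positivity))
    obtain ⟨m, hm, hlt⟩ := hclose.frequently.forall_exists_of_atTop n
    rw [abs_lt] at hlt
    exact ⟨hx n, ⟨m, hm, by linarith⟩, ⟨m, hm, by linarith⟩⟩

variable [TopologicalSpace X]

lemma isOpen_graphStrip {V : Set X} (hV : IsOpen V) {g : ℕ → X → ℝ} (hg : ∀ m, Continuous (g m))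
    (n : ℕ) (ε : ℝ) : IsOpen (graphStrip V g n ε) := by
  simp only [graphStrip, ofPred_and, ofPred_exists]
  exact (hV.preimage continuous_fst).inter <| .inter
    (isOpen_iUnion fun m => isOpen_const.inter <| isOpen_lt (by fun_prop) (by fun_prop))
    (isOpen_iUnion fun m => isOpen_const.inter <| isOpen_lt (by fun_prop) (by fun_prop))

theorem exists_isOpen_ordConnected_iInter_eq_graph {A : Set X} (hA : IsGδ A)
    {g : ℕ → X → ℝ} (hg : ∀ m, Continuous (g m)) {f : X → ℝ}
    (hgf : ∀ x ∈ A, Tendsto (g · x) atTop (𝓝 (f x))) :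
    ∃ S : ℕ → Set (X × ℝ), (∀ n, IsOpen (S n)) ∧
      (∀ n, ∀ x : X, {y : ℝ | (x, y) ∈ S n}.OrdConnected) ∧
      ⋂ n, S n = {p | p.1 ∈ A ∧ p.2 = f p.1} := by
  obtain ⟨V, hV, rfl⟩ := hA.eq_iInter_nat
  exact ⟨fun n => graphStrip (V n) g n (1 / (n + 1)), fun n => isOpen_graphStrip (hV n) hg _ _,
    fun n => ordConnected_graphStrip_section _ _ _ _, iInter_graphStrip_eq hgf⟩

end GraphStrip

lemma Baire1.exists_continuous_tendsto {f : ℝ → ℝ} (hf : Baire1 f) :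
    ∃ g : ℕ → ℝ → ℝ, (∀ m, Continuous (g m)) ∧
      ∀ x ∈ Icc (0 : ℝ) 1, Tendsto (g · x) atTop (𝓝 (f x)) := by
  obtain ⟨g, hgc, hgf⟩ := hf
  refine ⟨fun m => IccExtend zero_le_one ((Icc 0 1).domRestrict (g m)),
    fun m => (hgc m).domRestrict.Icc_extend', fun x hx => ?_⟩
  simpa only [IccExtend_of_mem _ _ hx, domRestrict_apply] using hgf x hx

theorem stmt17 (f : ℝ → ℝ) (hf : Baire1 f) :
    ∃ S : ℕ → Set (ℝ × ℝ), (∀ n, IsOpen (S n)) ∧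
      (∀ n, ∀ x : ℝ, ({y : ℝ | (x, y) ∈ S n}).OrdConnected) ∧
      (⋂ n, S n) = graphOn (Icc 0 1) f := by
  obtain ⟨g, hg, hgf⟩ := hf.exists_continuous_tendsto
  exact exists_isOpen_ordConnected_iInter_eq_graph isClosed_Icc.isGδ hg hgf
end
end

section
/- Let f : [0,1] → ℝ be a function whose graph G is the intersection of a countable sequence of open strips (open sets in ℝ² with every vertical section an open interval). Then f is of Baire class 1. -/
open Set Filter Topology Metric

noncomputable section

/-!
For each `n`, the finite intersection `S 0 ∩ ⋯ ∩ S n` is an open set with convex vertical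
sections containing the graph of `f`, so Michael-type selection via a partition of unity gives a
continuous `gₙ` whose graph lies in it. At a fixed `x`, the sections of the `S k` are intervals
through `f x` that shrink to `{f x}`, so `gₙ x`, lying in those of `S 0, …, S n`, tends to `f x`.
-/

theorem IsOpen.exists_continuous_forall_mem_of_convex_sections
    {X E : Type*} [TopologicalSpace X] [NormalSpace X] [ParacompactSpace X]
    [AddCommGroup E] [Module ℝ E] [TopologicalSpace E] [ContinuousAdd E] [ContinuousSMul ℝ E]
    {U : Set (X × E)} (hU : IsOpen U) (hconv : ∀ x, Convex ℝ {y | (x, y) ∈ U})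
    {f : X → E} (hf : ∀ x, (x, f x) ∈ U) :
    ∃ g : C(X, E), ∀ x, (x, g x) ∈ U :=
  exists_continuous_forall_mem_convex_of_local_const hconv fun x =>
    ⟨f x, (hU.preimage (by fun_prop : Continuous fun y => (y, f x))).mem_nhds (hf x)⟩

theorem exists_continuous_forall_le_mem_of_ordConnected_sections
    {X : Type*} [TopologicalSpace X] [NormalSpace X] [ParacompactSpace X]
    {S : ℕ → Set (X × ℝ)} (hopen : ∀ k, IsOpen (S k))
    (hstrip : ∀ k x, {y | (x, y) ∈ S k}.OrdConnected)
    {f : X → ℝ} (hf : ∀ x k, (x, f x) ∈ S k) (n : ℕ) :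
    ∃ g : C(X, ℝ), ∀ x, ∀ k ≤ n, (x, g x) ∈ S k := by
  have hU : IsOpen (⋂ k ∈ Iic n, S k) := (finite_Iic n).isOpen_biInter fun k _ => hopen k
  have hconv : ∀ x, Convex ℝ {y | (x, y) ∈ ⋂ k ∈ Iic n, S k} := fun x => by
    simpa only [mem_iInter, ofPred_forall] using
      (ordConnected_biInter fun k (_ : k ∈ Iic n) => hstrip k x).convex
  obtain ⟨g, hg⟩ := hU.exists_continuous_forall_mem_of_convex_sections hconv
    fun x => mem_iInter₂.2 fun k _ => hf x k
  exact ⟨g, fun x k hk => mem_iInter₂.1 (hg x) k hk⟩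

theorem tendsto_of_forall_mem_of_iInter_eq_singleton {T : ℕ → Set ℝ}
    (hT : ∀ k, (T k).OrdConnected) {a : ℝ} (hTa : ⋂ k, T k = {a}) {y : ℕ → ℝ}
    (hy : ∀ n, ∀ k ≤ n, y n ∈ T k) :
    Tendsto y atTop (𝓝 a) := by
  have ha : ∀ k, a ∈ T k := mem_iInter.1 (hTa ▸ mem_singleton a)
  have hout : ∀ b ≠ a, ∃ N, b ∉ T N := fun b hb => by
    by_contra! h
    have hb' := mem_iInter.2 h
    rw [hTa] at hb'
    exact hb hb'
  rw [Metric.tendsto_atTop]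
  intro ε hε
  obtain ⟨N₁, hN₁⟩ := hout (a + ε) (by linarith)
  obtain ⟨N₂, hN₂⟩ := hout (a - ε) (by linarith)
  refine ⟨max N₁ N₂, fun n hn => ?_⟩
  rw [Real.dist_eq, abs_lt]
  constructor
  · by_contra! h
    exact hN₂ ((hT N₂).out (hy n N₂ (le_of_max_le_right hn)) (ha N₂)
      ⟨by linarith, by linarith⟩)
  · by_contra! h
    exact hN₁ ((hT N₁).out (ha N₁) (hy n N₁ (le_of_max_le_left hn))
      ⟨by linarith, by linarith⟩)

theorem Baire1.of_tendsto_continuousMap {f : ℝ → ℝ} (g : ℕ → C(Icc (0:ℝ) 1, ℝ))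
    (hg : ∀ x (hx : x ∈ Icc (0:ℝ) 1), Tendsto (fun n => g n ⟨x, hx⟩) atTop (𝓝 (f x))) :
    Baire1 f := by
  refine ⟨fun n => IccExtend zero_le_one (g n),
    fun n => (g n).continuous.Icc_extend'.continuousOn, fun x hx => ?_⟩
  simpa only [IccExtend_of_mem _ _ hx] using hg x hx

theorem stmt18 (f : ℝ → ℝ) (S : ℕ → Set (ℝ × ℝ)) (hopen : ∀ n, IsOpen (S n))
    (hstrip : ∀ n, ∀ x : ℝ, ({y : ℝ | (x, y) ∈ S n}).OrdConnected)
    (hinter : (⋂ n, S n) = graphOn (Icc 0 1) f) :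
    Baire1 f := by
  have hsection : ∀ x ∈ Icc (0:ℝ) 1, ⋂ k, {y : ℝ | (x, y) ∈ S k} = {f x} := by
    intro x hx
    ext y
    simpa [_root_.graphOn, hx.1, hx.2] using congrArg ((x, y) ∈ ·) hinter
  have hgraph : ∀ x ∈ Icc (0:ℝ) 1, ∀ k, (x, f x) ∈ S k := fun x hx =>
    mem_iInter.1 (hinter ▸ ⟨hx, rfl⟩ : (x, f x) ∈ ⋂ k, S k)
  have hselect := exists_continuous_forall_le_mem_of_ordConnected_sections
    (S := fun k => (fun p : Icc (0:ℝ) 1 × ℝ => ((p.1 : ℝ), p.2)) ⁻¹' S k)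
    (fun k => (hopen k).preimage (by fun_prop)) (fun k x => hstrip k x)
    (f := fun x => f x) fun x k => hgraph x x.2 k
  choose g hg using hselect
  exact Baire1.of_tendsto_continuousMap g fun x hx =>
    tendsto_of_forall_mem_of_iInter_eq_singleton (hstrip · x) (hsection x hx)
      fun n k hk => hg n ⟨x, hx⟩ k hk
end
end
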